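/- The function H(x) = 1 - 2·∑_{i=1}^∞ (-1)^{i-1} e^{-2 i² x²} is monotone nondecreasing on [0, ∞), satisfies H(0) = 0 (interpreting the alternating series, which sums to 1/2 at x = 0), and H(x) → 1 as x → ∞. -/

import Mathlib

/-!
For `x > 0`, folding the alternating series over `ℤ` gives
`H x = ∑_{n ∈ ℤ} (-1)^n e^{-2n²x²}`, and Jacobi's theta transformation (Poisson summation)
turns this into `H x = √(π/2) ∑_{n ∈ ℤ} x⁻¹ e^{-π²(n - 1/2)²/(2x²)}`. Every summand is
nonnegative, and `x ↦ x⁻¹ e^{-c/x²}` increases as long as `x² ≤ 2c`; since `c ≥ π²/8`, this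
gives monotonicity on `(0, π/2]`. For `x ≥ 1` one instead groups the original series in pairs
`e^{-a x²} - e^{-b x²}` with `1 ≤ a ≤ b`, each of which decreases in `x`. The limit at
infinity is dominated convergence (Tannery's theorem) for the original series.
-/

/-- The Kolmogorov–Smirnov distribution function, with the standard
convention `H x = 0` for `x ≤ 0` (the alternating series at `x = 0`
sums to `1/2` in the Abel sense, yielding `H 0 = 0`). -/
noncomputable def ksCDF : ℝ → ℝ := fun x =>
  if x ≤ 0 then 0
  else 1 - 2 * ∑' i : ℕ, (-1 : ℝ) ^ i * Real.exp (-2 * ((i : ℝ) + 1) ^ 2 * x ^ 2)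

open Real Filter Topology Set

theorem tsum_neg_one_zpow_mul_exp_neg_mul_int_sq {a : ℝ} (ha : 0 < a) :
    ∑' n : ℤ, (-1 : ℝ) ^ n * exp (-a * n ^ 2) =
      √(π / a) * ∑' n : ℤ, exp (-(π ^ 2 / a) * (n - 1 / 2) ^ 2) := by
  have haπ : 0 < a / π := div_pos ha pi_pos
  -- With `b = I / 2`, `exp (2πbn) = (-1) ^ n` and `n + I * b = n - 1 / 2`.
  have h :=
    Complex.tsum_exp_neg_quadratic (a := (a / π : ℝ)) (by simpa using haπ) (Complex.I / 2)
  have hlhs (n : ℤ) :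
      Complex.exp (-π * ((a / π : ℝ) : ℂ) * n ^ 2 + 2 * π * (Complex.I / 2) * n)
        = (((-1 : ℝ) ^ n * exp (-a * n ^ 2) : ℝ) : ℂ) := by
    have : -π * ((a / π : ℝ) : ℂ) * n ^ 2 + 2 * π * (Complex.I / 2) * n
        = ((-a * n ^ 2 : ℝ) : ℂ) + n * (π * Complex.I) := by
      push_cast
      field_simp [Complex.ofReal_ne_zero.mpr pi_ne_zero]
    rw [this, Complex.exp_add, Complex.exp_int_mul, Complex.exp_pi_mul_I, ← Complex.ofReal_exp]
    push_cast
    ring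
  have hrhs (n : ℤ) :
      Complex.exp (-π / ((a / π : ℝ) : ℂ) * (n + Complex.I * (Complex.I / 2)) ^ 2)
        = (exp (-(π ^ 2 / a) * (n - 1 / 2) ^ 2) : ℂ) := by
    rw [Complex.ofReal_exp]
    congr 1
    push_cast
    field_simp [Complex.ofReal_ne_zero.mpr pi_ne_zero]
    ring_nf
    simp [Complex.I_sq]
  have hpre : (1 : ℂ) / ((a / π : ℝ) : ℂ) ^ (1 / 2 : ℂ) = (√(π / a) : ℝ) := by
    rw [show (1 / 2 : ℂ) = ((1 / 2 : ℝ) : ℂ) by norm_num, ← Complex.ofReal_cpow haπ.le,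
      ← sqrt_eq_rpow, one_div, ← Complex.ofReal_inv, ← sqrt_inv, inv_div]
  simp only [hlhs, hrhs, hpre, ← Complex.ofReal_tsum, ← Complex.ofReal_mul] at h
  exact_mod_cast h

lemma summable_exp_neg_mul_int_add_sq {a : ℝ} (ha : 0 < a) (b : ℝ) :
    Summable fun n : ℤ => exp (-a * (n + b) ^ 2) :=
  (HurwitzKernelBounds.summable_f_int 0 b (t := a / π) (by positivity)).congr fun n => by
    rw [HurwitzKernelBounds.f_int, pow_zero, one_mul]
    field_simp

lemma one_div_four_le_int_sub_half_sq (n : ℤ) : 1 / 4 ≤ ((n : ℝ) - 1 / 2) ^ 2 := by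
  have h : (0 : ℤ) ≤ n * (n - 1) := by
    rcases le_or_gt n 0 with hn | hn <;> nlinarith
  have h' : (0 : ℝ) ≤ n * (n - 1) := by exact_mod_cast h
  nlinarith

lemma mul_exp_neg_mul_sq_le_of_le {c u v : ℝ} (hu : 0 ≤ u) (hcu : 1 ≤ 2 * c * u ^ 2)
    (huv : u ≤ v) : v * exp (-(c * v ^ 2)) ≤ u * exp (-(c * u ^ 2)) := by
  have hc : 0 ≤ c := by nlinarith [sq_nonneg u]
  have hlin : v ≤ u * (1 + c * (v ^ 2 - u ^ 2)) := by
    nlinarith [mul_nonneg (mul_nonneg hc hu) (sq_nonneg (v - u)),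
      mul_nonneg (sub_nonneg.2 hcu) (sub_nonneg.2 huv)]
  have hexp : v ≤ u * exp (c * (v ^ 2 - u ^ 2)) :=
    hlin.trans (mul_le_mul_of_nonneg_left (by linarith [add_one_le_exp (c * (v ^ 2 - u ^ 2))]) hu)
  calc v * exp (-(c * v ^ 2)) ≤ u * exp (c * (v ^ 2 - u ^ 2)) * exp (-(c * v ^ 2)) := by gcongr
    _ = u * exp (-(c * u ^ 2)) := by rw [mul_assoc, ← exp_add]; ring_nf

lemma antitoneOn_exp_neg_mul_sub_exp_neg_mul {a b : ℝ} (ha : 0 < a) (hab : a ≤ b) :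
    AntitoneOn (fun s => exp (-a * s) - exp (-b * s)) (Ici a⁻¹) := by
  have hderiv (s : ℝ) : HasDerivAt (fun s => exp (-a * s) - exp (-b * s))
      (exp (-a * s) * -a - exp (-b * s) * -b) s :=
    (((hasDerivAt_id s).const_mul (-a)).exp.sub ((hasDerivAt_id s).const_mul (-b)).exp).congr_deriv
      (by simp)
  refine antitoneOn_of_hasDerivWithinAt_nonpos (convex_Ici _) (by fun_prop)
    (fun s _ => (hderiv s).hasDerivWithinAt) fun s hs => ?_
  rw [interior_Ici, mem_Ioi, inv_lt_iff_one_lt_mul₀ ha] at hs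
  have hb : b ≤ a * exp ((b - a) * s) := by
    nlinarith [add_one_le_exp ((b - a) * s), mul_le_mul_of_nonneg_left hs.le (sub_nonneg.2 hab)]
  have hsplit : exp (-a * s) = exp ((b - a) * s) * exp (-b * s) := by rw [← exp_add]; ring_nf
  nlinarith [exp_pos (-b * s)]

noncomputable def ksSeries (x : ℝ) : ℝ :=
  ∑' i : ℕ, (-1 : ℝ) ^ i * exp (-2 * ((i : ℝ) + 1) ^ 2 * x ^ 2)

lemma ksCDF_of_nonpos {x : ℝ} (hx : x ≤ 0) : ksCDF x = 0 := if_pos hx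

lemma ksCDF_of_pos {x : ℝ} (hx : 0 < x) : ksCDF x = 1 - 2 * ksSeries x := if_neg hx.not_ge

lemma summable_exp_neg_two_mul_succ_sq_mul_sq {x : ℝ} (hx : x ≠ 0) :
    Summable fun i : ℕ => exp (-2 * ((i : ℝ) + 1) ^ 2 * x ^ 2) := by
  have h := summable_exp_nat_mul_of_ge (c := -(2 * x ^ 2)) (neg_lt_zero.2 (by positivity))
    (f := fun i : ℕ => ((i : ℝ) + 1) ^ 2) fun i => by nlinarith
  exact h.congr fun i => by ring_nf

lemma summable_ksSeries {x : ℝ} (hx : x ≠ 0) :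
    Summable fun i : ℕ => (-1 : ℝ) ^ i * exp (-2 * ((i : ℝ) + 1) ^ 2 * x ^ 2) :=
  (summable_exp_neg_two_mul_succ_sq_mul_sq hx).of_norm_bounded fun i => by simp

lemma one_sub_two_mul_ksSeries {x : ℝ} (hx : x ≠ 0) :
    1 - 2 * ksSeries x = ∑' n : ℤ, (-1 : ℝ) ^ n * exp (-(2 * x ^ 2) * n ^ 2) := by
  have hgauss : Summable fun n : ℤ => exp (-(2 * x ^ 2) * n ^ 2) := by
    simpa using summable_exp_neg_mul_int_add_sq (a := 2 * x ^ 2) (by positivity) 0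
  have hsum : Summable fun n : ℤ => (-1 : ℝ) ^ n * exp (-(2 * x ^ 2) * n ^ 2) :=
    hgauss.of_norm_bounded fun n => by simp
  have hterm (n : ℕ) :
      (-1 : ℝ) ^ ((n + 1 : ℕ) : ℤ) * exp (-(2 * x ^ 2) * ((n + 1 : ℕ) : ℤ) ^ 2)
        = -((-1) ^ n * exp (-2 * ((n : ℝ) + 1) ^ 2 * x ^ 2)) := by
    rw [zpow_natCast, pow_succ]
    push_cast
    ring_nf
  rw [tsum_int_eq_zero_add_two_mul_tsum_pnat (fun n => by simp [← inv_zpow]) hsum,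
    tsum_pnat_eq_tsum_succ
      (f := fun n : ℕ => (-1 : ℝ) ^ (n : ℤ) * exp (-(2 * x ^ 2) * (n : ℤ) ^ 2)),
    tsum_congr hterm, tsum_neg, ksSeries]
  norm_num [sub_eq_add_neg]

lemma ksCDF_eq_tsum_dual {x : ℝ} (hx : 0 < x) :
    ksCDF x =
      √(π / 2) * ∑' n : ℤ, x⁻¹ * exp (-(π ^ 2 * ((n : ℝ) - 1 / 2) ^ 2 / 2 * x⁻¹ ^ 2)) := by
  rw [ksCDF_of_pos hx, one_sub_two_mul_ksSeries hx.ne',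
    tsum_neg_one_zpow_mul_exp_neg_mul_int_sq (by positivity)]
  have hsqrt : √(π / (2 * x ^ 2)) = √(π / 2) * x⁻¹ := by
    rw [div_mul_eq_div_div, sqrt_div' _ (sq_nonneg x), sqrt_sq hx.le, div_eq_mul_inv]
  rw [hsqrt, mul_assoc, ← tsum_mul_left]
  congr 1
  refine tsum_congr fun n => ?_
  congr 2
  field_simp

lemma ksCDF_nonneg (x : ℝ) : 0 ≤ ksCDF x := by
  rcases le_or_gt x 0 with hx | hx
  · rw [ksCDF_of_nonpos hx]
  · rw [ksCDF_eq_tsum_dual hx]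
    exact mul_nonneg (sqrt_nonneg _) (tsum_nonneg fun n => by positivity)

lemma monotoneOn_ksCDF_Iic : MonotoneOn ksCDF (Iic (π / 2)) := by
  intro x _ y hy hxy
  rcases le_or_gt x 0 with hx | hx
  · exact (ksCDF_of_nonpos hx).trans_le (ksCDF_nonneg y)
  have hy0 : 0 < y := hx.trans_le hxy
  have hsum {z : ℝ} (hz : 0 < z) : Summable fun n : ℤ =>
      z⁻¹ * exp (-(π ^ 2 * ((n : ℝ) - 1 / 2) ^ 2 / 2 * z⁻¹ ^ 2)) :=
    ((summable_exp_neg_mul_int_add_sq (a := π ^ 2 / (2 * z ^ 2)) (by positivity) (-1 / 2)).mul_left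
      z⁻¹).congr fun n => by congr 2; field_simp; ring
  rw [ksCDF_eq_tsum_dual hx, ksCDF_eq_tsum_dual hy0]
  refine mul_le_mul_of_nonneg_left ((hsum hx).tsum_le_tsum (fun n => ?_) (hsum hy0)) (sqrt_nonneg _)
  refine mul_exp_neg_mul_sq_le_of_le (by positivity) ?_ (inv_anti₀ hx hxy)
  have hy' : 2 / π ≤ y⁻¹ := by
    rw [le_inv_comm₀ (by positivity) hy0, inv_div]
    exact hy
  calc (1 : ℝ) = π ^ 2 * (1 / 4) * (2 / π) ^ 2 := by field_simp; ring
    _ ≤ π ^ 2 * ((n : ℝ) - 1 / 2) ^ 2 * y⁻¹ ^ 2 := by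
      gcongr
      exact one_div_four_le_int_sub_half_sq n
    _ = 2 * (π ^ 2 * ((n : ℝ) - 1 / 2) ^ 2 / 2) * y⁻¹ ^ 2 := by ring

lemma hasSum_ksSeries_pairs {x : ℝ} (hx : x ≠ 0) :
    HasSum (fun k : ℕ => exp (-(2 * (2 * (k : ℝ) + 1) ^ 2) * x ^ 2)
      - exp (-(2 * (2 * (k : ℝ) + 2) ^ 2) * x ^ 2)) (ksSeries x) := by
  set f : ℕ → ℝ := fun i => (-1 : ℝ) ^ i * exp (-2 * ((i : ℝ) + 1) ^ 2 * x ^ 2)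
    with hf_def
  have hf : Summable f := summable_ksSeries hx
  have he : Summable fun k => f (2 * k) :=
    hf.comp_injective (fun a b (h : 2 * a = 2 * b) => by omega)
  have ho : Summable fun k => f (2 * k + 1) :=
    hf.comp_injective (fun a b (h : 2 * a + 1 = 2 * b + 1) => by omega)
  convert he.hasSum.add ho.hasSum using 1
  · funext k
    simp only [hf_def, pow_succ, pow_mul]
    push_cast
    ring_nf
  · rw [ksSeries, tsum_even_add_odd he ho]

lemma antitoneOn_ksSeries : AntitoneOn ksSeries (Ici 1) := by
  intro x hx y hy hxy
  rw [mem_Ici] at hx hy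
  refine hasSum_le (fun k => ?_) (hasSum_ksSeries_pairs (by positivity))
    (hasSum_ksSeries_pairs (by positivity))
  have ha : 1 ≤ 2 * (2 * (k : ℝ) + 1) ^ 2 := by nlinarith [k.cast_nonneg (α := ℝ)]
  have hx2 : (2 * (2 * (k : ℝ) + 1) ^ 2)⁻¹ ≤ x ^ 2 :=
    (inv_le_one_of_one_le₀ ha).trans (one_le_pow₀ hx)
  exact antitoneOn_exp_neg_mul_sub_exp_neg_mul (by positivity) (by gcongr; norm_num) hx2
    (hx2.trans (by gcongr)) (by gcongr)

lemma tendsto_ksSeries_atTop : Tendsto ksSeries atTop (𝓝 0) := by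
  have hterm (i : ℕ) :
      Tendsto (fun x : ℝ => (-1 : ℝ) ^ i * exp (-2 * ((i : ℝ) + 1) ^ 2 * x ^ 2)) atTop (𝓝 0) := by
    have h := (tendsto_pow_atTop two_ne_zero).const_mul_atTop_of_neg
      (mul_neg_of_neg_of_pos (by norm_num) (by positivity) : -2 * ((i : ℝ) + 1) ^ 2 < 0)
    simpa using (tendsto_exp_atBot.comp h).const_mul ((-1 : ℝ) ^ i)
  have hbound : ∀ᶠ x : ℝ in atTop, ∀ i : ℕ,
      ‖(-1 : ℝ) ^ i * exp (-2 * ((i : ℝ) + 1) ^ 2 * x ^ 2)‖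
        ≤ exp (-2 * ((i : ℝ) + 1) ^ 2 * 1 ^ 2) := by
    filter_upwards [eventually_ge_atTop 1] with x hx i
    rw [norm_mul, norm_pow, norm_neg, norm_one, one_pow, one_mul, norm_of_nonneg (exp_pos _).le]
    exact exp_le_exp.2 (by nlinarith [one_le_pow₀ (n := 2) hx, sq_nonneg ((i : ℝ) + 1)])
  have h := tendsto_tsum_of_dominated_convergence
    (summable_exp_neg_two_mul_succ_sq_mul_sq one_ne_zero) hterm hbound
  rwa [tsum_zero] at h

lemma monotone_ksCDF : Monotone ksCDF := by
  refine MonotoneOn.Iic_union_Ici (a := 1) (monotoneOn_ksCDF_Iic.mono (Iic_subset_Iic.2 ?_))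
    fun x hx y hy hxy => ?_
  · linarith [pi_gt_three]
  · have hx0 : (0 : ℝ) < x := one_pos.trans_le hx
    rw [ksCDF_of_pos hx0, ksCDF_of_pos (hx0.trans_le hxy)]
    linarith [antitoneOn_ksSeries hx hy hxy]

lemma tendsto_ksCDF_atTop : Tendsto ksCDF atTop (𝓝 1) := by
  have hlim : Tendsto (fun x => 1 - 2 * ksSeries x) atTop (𝓝 1) := by
    simpa using (tendsto_ksSeries_atTop.const_mul 2).const_sub 1
  refine hlim.congr' ?_
  filter_upwards [eventually_gt_atTop 0] with x hx using (ksCDF_of_pos hx).symm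

theorem stmt_3 :
    (MonotoneOn ksCDF (Set.Ici (0 : ℝ))) ∧ ksCDF 0 = 0 ∧
      Filter.Tendsto ksCDF Filter.atTop (nhds 1) :=
  ⟨monotone_ksCDF.monotoneOn _, ksCDF_of_nonpos le_rfl, tendsto_ksCDF_atTop⟩
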